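/- arXiv:math/0108035 — 2 statements merged into one kernel-verified Lean document; each statement's English description precedes it below -/
import Mathlib

section
/- The double integral ∫_𝔻 ∫_𝔻 |conj(z) − conj(w)|²/|1 − z·conj(w)|⁴ dλ(z) dλ(w) is finite; equivalently, the kernel (z,w) ↦ (conj(z) − conj(w))·B(z,w), where B(z,w) = (1/π)(1 − z·conj(w))^{−2} is the Bergman kernel of the unit disc, is square integrable over 𝔻 × 𝔻. -/
/-!
For `z, w ∈ 𝔻` both `|z - w|` and `1 - |w|` are at most `|1 - z w̄|`, so the integrand is at most
`|1 - z w̄|⁻² ≤ (1 - |w|)^(-1/2) |z - w|^(-3/2)`. The singularity `|z - w|^(-3/2)` is integrable in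
the plane, uniformly in `w`, and `(1 - |w|)^(-1/2)` is integrable over the disc.
-/

open MeasureTheory Metric Set
open scoped ENNReal ComplexConjugate

namespace Complex

theorem normSq_one_sub_mul_conj (z w : ℂ) :
    normSq (1 - z * conj w) = normSq (z - w) + (1 - normSq z) * (1 - normSq w) := by
  simp only [normSq_apply, sub_re, sub_im, mul_re, mul_im, one_re, one_im, conj_re, conj_im]
  ring

theorem norm_sub_le_norm_one_sub_mul_conj {z w : ℂ} (hz : ‖z‖ ≤ 1) (hw : ‖w‖ ≤ 1) :
    ‖z - w‖ ≤ ‖1 - z * conj w‖ := by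
  have hz' : normSq z ≤ 1 := by rw [← Complex.sq_norm]; nlinarith [norm_nonneg z]
  have hw' : normSq w ≤ 1 := by rw [← Complex.sq_norm]; nlinarith [norm_nonneg w]
  have h : normSq (z - w) ≤ normSq (1 - z * conj w) := by
    rw [normSq_one_sub_mul_conj]
    nlinarith
  rw [← Complex.sq_norm, ← Complex.sq_norm] at h
  exact (pow_le_pow_iff_left₀ (norm_nonneg _) (norm_nonneg _) two_ne_zero).mp h

theorem one_sub_norm_le_norm_one_sub_mul_conj {z : ℂ} (w : ℂ) (hz : ‖z‖ ≤ 1) :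
    1 - ‖w‖ ≤ ‖1 - z * conj w‖ := by
  have h := norm_sub_norm_le (1 : ℂ) (z * conj w)
  rw [norm_one, norm_mul, norm_conj] at h
  nlinarith [norm_nonneg w]

theorem norm_conj_sub_sq_div_le {z w : ℂ} {a b : ℝ} (hz : ‖z‖ ≤ 1) (hw : ‖w‖ < 1)
    (ha : 0 ≤ a) (hb : 0 ≤ b) (hab : a + b = 2) :
    ‖conj z - conj w‖ ^ 2 / ‖1 - z * conj w‖ ^ 4 ≤ (1 - ‖w‖) ^ (-b) * ‖z - w‖ ^ (-a) := by
  rw [← map_sub, norm_conj]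
  set q := ‖1 - z * conj w‖
  set d := ‖z - w‖
  have hdq : d ≤ q := norm_sub_le_norm_one_sub_mul_conj hz hw.le
  have heq : 1 - ‖w‖ ≤ q := one_sub_norm_le_norm_one_sub_mul_conj w hz
  have he : 0 < 1 - ‖w‖ := by linarith
  rcases (show 0 ≤ d from norm_nonneg _).eq_or_lt with hd | hd
  · rw [← hd, zero_pow two_ne_zero, zero_div]
    positivity
  have hq : 0 < q := hd.trans_le hdq
  have hq2 : d ^ a * (1 - ‖w‖) ^ b ≤ q ^ 2 := by
    calc d ^ a * (1 - ‖w‖) ^ b ≤ q ^ a * q ^ b := by gcongr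
      _ = q ^ 2 := by rw [← Real.rpow_add hq, hab, Real.rpow_two]
  calc d ^ 2 / q ^ 4 ≤ 1 / q ^ 2 := by
        rw [div_le_div_iff₀ (by positivity) (by positivity)]
        nlinarith [pow_le_pow_left₀ hd.le hdq 2, pow_pos hq 2]
    _ ≤ 1 / (d ^ a * (1 - ‖w‖) ^ b) := one_div_le_one_div_of_le (by positivity) hq2
    _ = (1 - ‖w‖) ^ (-b) * d ^ (-a) := by
        rw [Real.rpow_neg hd.le, Real.rpow_neg he.le]
        field_simp

end Complex

section Integrability

variable {E : Type*} [NormedAddCommGroup E] [MeasurableSpace E] [BorelSpace E]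

theorem integrableOn_ball_one_sub_norm_rpow_neg [NormedSpace ℝ E] [FiniteDimensional ℝ E]
    [Nontrivial E] (μ : Measure E) [μ.IsAddHaarMeasure] {s : ℝ} (hs : s < 1) :
    IntegrableOn (fun x : E => (1 - ‖x‖) ^ (-s)) (ball 0 1) μ := by
  rw [integrableOn_fun_norm_addHaar μ (f := fun y => (1 - y) ^ (-s))]
  have hint : IntegrableOn (fun y : ℝ => (1 - y) ^ (-s)) (Ioo 0 1) := by
    have h := ((intervalIntegral.intervalIntegrable_rpow' (a := 0) (b := 1)
      (by linarith : -1 < -s)).comp_sub_left 1).symm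
    simp only [sub_zero, sub_self] at h
    exact (intervalIntegrable_iff_integrableOn_Ioc_of_le zero_le_one).mp h
      |>.mono_set Ioo_subset_Ioc_self
  refine hint.mono' (by fun_prop) ((ae_restrict_iff' measurableSet_Ioo).mpr (ae_of_all _ ?_))
  rintro y ⟨hy0, hy1⟩
  rw [smul_eq_mul, norm_mul, Real.norm_of_nonneg (by positivity),
    Real.norm_of_nonneg (Real.rpow_nonneg (by linarith) _)]
  exact mul_le_of_le_one_left (by positivity) (pow_le_one₀ hy0.le hy1.le)

theorem setLIntegral_ball_comp_sub_le (μ : Measure E) [μ.IsAddRightInvariant] (f : E → ℝ≥0∞)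
    (w : E) (r : ℝ) :
    ∫⁻ z in ball 0 r, f (z - w) ∂μ ≤ ∫⁻ u in ball 0 (r + ‖w‖), f u ∂μ := by
  calc ∫⁻ z in ball 0 r, f (z - w) ∂μ
      ≤ ∫⁻ z in (· - w) ⁻¹' ball 0 (r + ‖w‖), f (z - w) ∂μ := by
        refine lintegral_mono_set fun z hz => ?_
        rw [mem_ball_zero_iff] at hz
        rw [mem_preimage, mem_ball_zero_iff]
        linarith [norm_sub_le z w]
    _ = ∫⁻ u in ball 0 (r + ‖w‖), f u ∂μ :=
        (measurePreserving_sub_right μ w).setLIntegral_comp_preimage_emb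
          (Homeomorph.subRight w).measurableEmbedding f _

end Integrability

/-- `∫_𝔻 ∫_𝔻 |conj z − conj w|²/|1 − z·conj w|⁴ dλ(z) dλ(w) < ∞`, i.e. the kernel
`(z,w) ↦ (conj z − conj w)·B(z,w)` of the canonical solution operator is square
integrable over `𝔻 × 𝔻`. -/
theorem integral_bergman_kernel_sq_lt_top :
    (∫⁻ w in Metric.ball (0 : ℂ) 1, ∫⁻ z in Metric.ball (0 : ℂ) 1,
      ENNReal.ofReal (‖(starRingEnd ℂ) z - (starRingEnd ℂ) w‖ ^ 2 /
        ‖1 - z * (starRingEnd ℂ) w‖ ^ 4)) < ⊤ := by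
  set 𝔻 := ball (0 : ℂ) 1
  have hnear : ∫⁻ u in ball (0 : ℂ) 2, ENNReal.ofReal (‖u‖ ^ (-(3 / 2 : ℝ))) < ⊤ := by
    refine (integrableOn_ball_of_norm_le_rpow (C := 1) (α := 3 / 2) (by simp)
      (by rw [Complex.finrank_real_complex]; norm_num) (ae_of_all _ fun u => ?_)
      (measurable_norm.pow_const _).aestronglyMeasurable).lintegral_lt_top
    rw [one_mul, Real.norm_of_nonneg (by positivity)]
  have hedge : ∫⁻ w in 𝔻, ENNReal.ofReal ((1 - ‖w‖) ^ (-(1 / 2 : ℝ))) < ⊤ :=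
    (integrableOn_ball_one_sub_norm_rpow_neg volume (by norm_num)).lintegral_lt_top
  have hinner (w : ℂ) (hw : w ∈ 𝔻) : ∫⁻ z in 𝔻, ENNReal.ofReal (‖z - w‖ ^ (-(3 / 2 : ℝ))) ≤
      ∫⁻ u in ball (0 : ℂ) 2, ENNReal.ofReal (‖u‖ ^ (-(3 / 2 : ℝ))) := by
    rw [mem_ball_zero_iff] at hw
    exact (setLIntegral_ball_comp_sub_le volume (fun u => ENNReal.ofReal (‖u‖ ^ (-(3 / 2 : ℝ))))
      w 1).trans (lintegral_mono_set (ball_subset_ball (by linarith)))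
  calc _ ≤ ∫⁻ w in 𝔻, ∫⁻ z in 𝔻, ENNReal.ofReal ((1 - ‖w‖) ^ (-(1 / 2 : ℝ))) *
          ENNReal.ofReal (‖z - w‖ ^ (-(3 / 2 : ℝ))) := by
        refine setLIntegral_mono' measurableSet_ball fun w hw =>
          setLIntegral_mono' measurableSet_ball fun z hz => ?_
        rw [mem_ball_zero_iff] at hw hz
        rw [← ENNReal.ofReal_mul (Real.rpow_nonneg (by linarith) _)]
        exact ENNReal.ofReal_le_ofReal
          (Complex.norm_conj_sub_sq_div_le hz.le hw (by norm_num) (by norm_num) (by norm_num))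
    _ = ∫⁻ w in 𝔻, ENNReal.ofReal ((1 - ‖w‖) ^ (-(1 / 2 : ℝ))) *
          ∫⁻ z in 𝔻, ENNReal.ofReal (‖z - w‖ ^ (-(3 / 2 : ℝ))) :=
        lintegral_congr fun w => lintegral_const_mul' _ _ ENNReal.ofReal_ne_top
    _ ≤ ∫⁻ w in 𝔻, ENNReal.ofReal ((1 - ‖w‖) ^ (-(1 / 2 : ℝ))) *
          ∫⁻ u in ball (0 : ℂ) 2, ENNReal.ofReal (‖u‖ ^ (-(3 / 2 : ℝ))) :=
        setLIntegral_mono' measurableSet_ball fun w hw => mul_le_mul_right (hinner w hw) _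
    _ = (∫⁻ w in 𝔻, ENNReal.ofReal ((1 - ‖w‖) ^ (-(1 / 2 : ℝ)))) *
          ∫⁻ u in ball (0 : ℂ) 2, ENNReal.ofReal (‖u‖ ^ (-(3 / 2 : ℝ))) :=
        lintegral_mul_const' _ _ hnear.ne
    _ < ⊤ := ENNReal.mul_lt_top hedge hnear
end

section
/- The function K((z₁,z₂),(w₁,w₂)) = (|z₁−w₁|² + |z₂−w₂|²)/|1 − z₁·conj(w₁) − z₂·conj(w₂)|⁶ does not belong to L²(𝔹² × 𝔹²), i.e. ∫_{𝔹²×𝔹²} K(z,w)² dλ(z) dλ(w) = ∞. -/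
/-!
Near the boundary point `(1, 0)` the kernel scales: if `z` and `w` both lie within `O(t)` of
`(1, 0)` inside the ball and `|z₂ - w₂| ≥ t`, then `|1 - z₁w̄₁ - z₂w̄₂| = O(t)`, so `K(z, w)² ≳ t⁻⁸`,
while such pairs fill a region of volume `≍ t⁸`. Every dyadic scale `t = 2⁻ᵏ⁻¹` therefore
contributes the same positive amount to `∫ K²`, and the regions of different scales are disjoint
because `1 - Re z₁ ∈ (t, 2t)` on the region of scale `t`.
-/

open MeasureTheory Set Metric Complex ComplexConjugate Function
open scoped ENNReal Real

theorem MeasureTheory.setLIntegral_eq_top_of_pairwise_disjoint {α ι : Type*}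
    [MeasurableSpace α] [Countable ι] [Infinite ι] {μ : Measure α} {f : α → ℝ≥0∞}
    {S : Set α} {s : ι → Set α} (hs : ∀ i, MeasurableSet (s i))
    (hd : Pairwise (Disjoint on s)) (hsS : ∀ i, s i ⊆ S) {c : ℝ≥0∞} (hc : c ≠ 0)
    (hcs : ∀ i, c ≤ ∫⁻ x in s i, f x ∂μ) :
    ∫⁻ x in S, f x ∂μ = ⊤ :=
  eq_top_iff.2 <| calc
    ⊤ = ∑' _ : ι, c := (ENNReal.tsum_const_eq_top_of_ne_zero hc).symm
    _ ≤ ∑' i, ∫⁻ x in s i, f x ∂μ := ENNReal.tsum_le_tsum hcs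
    _ = ∫⁻ x in ⋃ i, s i, f x ∂μ := (lintegral_iUnion hs hd f).symm
    _ ≤ ∫⁻ x in S, f x ∂μ := lintegral_mono_set (iUnion_subset hsS)

theorem Complex.re_mul_conj_le (a b : ℂ) : (a * conj b).re ≤ (‖a‖ ^ 2 + ‖b‖ ^ 2) / 2 := by
  have h := normSq_sub a b
  simp only [normSq_eq_norm_sq] at h
  nlinarith [sq_nonneg ‖a - b‖]

noncomputable section

def unitBall2 : Set (ℂ × ℂ) := {z | ‖z.1‖ ^ 2 + ‖z.2‖ ^ 2 < 1}

def ballKernel (z w : ℂ × ℂ) : ℝ :=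
  (‖z.1 - w.1‖ ^ 2 + ‖z.2 - w.2‖ ^ 2) / ‖1 - z.1 * conj w.1 - z.2 * conj w.2‖ ^ 6

theorem norm_one_sub_inner_pos {z w : ℂ × ℂ} (hz : z ∈ unitBall2) (hw : w ∈ unitBall2) :
    0 < ‖1 - z.1 * conj w.1 - z.2 * conj w.2‖ := by
  change ‖z.1‖ ^ 2 + ‖z.2‖ ^ 2 < 1 at hz
  change ‖w.1‖ ^ 2 + ‖w.2‖ ^ 2 < 1 at hw
  have hre : 0 < (1 - z.1 * conj w.1 - z.2 * conj w.2).re := by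
    simp only [sub_re, one_re]
    linarith [re_mul_conj_le z.1 w.1, re_mul_conj_le z.2 w.2]
  exact hre.trans_le (re_le_norm _)

theorem norm_one_sub_inner_le {z₁ z₂ w₁ w₂ : ℂ} (hz₁ : ‖z₁‖ ≤ 1) :
    ‖1 - z₁ * conj w₁ - z₂ * conj w₂‖ ≤ ‖1 - z₁‖ + ‖1 - w₁‖ + ‖z₂‖ * ‖w₂‖ := by
  have hsplit :
      1 - z₁ * conj w₁ - z₂ * conj w₂ = (1 - z₁) + z₁ * conj (1 - w₁) - z₂ * conj w₂ := by
    simp only [map_sub, map_one]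
    ring
  have hmid : ‖z₁‖ * ‖1 - w₁‖ ≤ ‖1 - w₁‖ := mul_le_of_le_one_left (norm_nonneg _) hz₁
  calc ‖1 - z₁ * conj w₁ - z₂ * conj w₂‖
      ≤ ‖1 - z₁‖ + ‖z₁ * conj (1 - w₁)‖ + ‖z₂ * conj w₂‖ := by
        rw [hsplit]
        exact (norm_sub_le _ _).trans (by gcongr; exact norm_add_le _ _)
    _ ≤ ‖1 - z₁‖ + ‖1 - w₁‖ + ‖z₂‖ * ‖w₂‖ := by
        simp only [norm_mul, RCLike.norm_conj]
        linarith

def bidisc (t : ℝ) (b : ℂ) : Set (ℂ × ℂ) :=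
  ball ((1 - 3 * t / 2 : ℝ) : ℂ) (t / 2) ×ˢ ball b (t / 2)

section bidisc

variable {t : ℝ} {b : ℂ} {z : ℂ × ℂ}

theorem pos_of_mem_bidisc (hz : z ∈ bidisc t b) : 0 < t := by
  linarith [pos_of_mem_ball hz.1]

theorem sub_re_mem_Ioo_of_mem_bidisc (hz : z ∈ bidisc t b) : 1 - z.1.re ∈ Ioo t (2 * t) := by
  have h := (abs_re_le_norm (z.1 - (1 - 3 * t / 2 : ℝ))).trans_lt (mem_ball_iff_norm.1 hz.1)
  rw [sub_re, ofReal_re, abs_lt] at h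
  constructor <;> linarith

theorem norm_one_sub_fst_lt (hz : z ∈ bidisc t b) : ‖1 - z.1‖ < 2 * t := by
  have ht := pos_of_mem_bidisc hz
  have hc : ‖1 - ((1 - 3 * t / 2 : ℝ) : ℂ)‖ = 3 * t / 2 := by
    rw [← ofReal_one, ← ofReal_sub, sub_sub_cancel, Complex.norm_of_nonneg (by linarith)]
  calc ‖1 - z.1‖ ≤ ‖1 - ((1 - 3 * t / 2 : ℝ) : ℂ)‖ + ‖((1 - 3 * t / 2 : ℝ) : ℂ) - z.1‖ :=
        norm_sub_le_norm_sub_add_norm_sub _ _ _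
    _ < 3 * t / 2 + t / 2 := by
        rw [hc, ← dist_eq_norm']
        gcongr
        exact hz.1
    _ = 2 * t := by ring

theorem norm_fst_lt (ht : t ≤ 1 / 2) (hz : z ∈ bidisc t b) : ‖z.1‖ < 1 - t := by
  have ht₀ := pos_of_mem_bidisc hz
  calc ‖z.1‖ ≤ ‖((1 - 3 * t / 2 : ℝ) : ℂ)‖ + ‖z.1 - ((1 - 3 * t / 2 : ℝ) : ℂ)‖ :=
        norm_le_insert' _ _
    _ < (1 - 3 * t / 2) + t / 2 := by
        rw [Complex.norm_of_nonneg (by linarith), ← dist_eq_norm]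
        gcongr
        exact hz.1
    _ = 1 - t := by ring

theorem norm_snd_lt (hb : ‖b‖ = t) (hz : z ∈ bidisc t b) : ‖z.2‖ < 3 * t / 2 := by
  calc ‖z.2‖ ≤ ‖b‖ + ‖z.2 - b‖ := norm_le_insert' _ _
    _ < t + t / 2 := by
        rw [hb, ← dist_eq_norm]
        gcongr
        exact hz.2
    _ = 3 * t / 2 := by ring

theorem bidisc_subset_unitBall2 (ht : t ≤ 1 / 2) (hb : ‖b‖ = t) : bidisc t b ⊆ unitBall2 := by
  intro z hz
  have ht₀ := pos_of_mem_bidisc hz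
  have h₁ := norm_fst_lt ht hz
  have h₂ := norm_snd_lt hb hz
  show ‖z.1‖ ^ 2 + ‖z.2‖ ^ 2 < 1
  nlinarith [norm_nonneg z.1, norm_nonneg z.2]

theorem measurableSet_bidisc : MeasurableSet (bidisc t b) :=
  measurableSet_ball.prod measurableSet_ball

theorem volume_bidisc (ht : 0 ≤ t) :
    volume (bidisc t b) = ENNReal.ofReal ((π * (t / 2) ^ 2) ^ 2) := by
  rw [bidisc, Measure.volume_eq_prod, Measure.prod_prod, Complex.volume_ball, Complex.volume_ball,
    ← ENNReal.ofReal_pow (by positivity), ← ENNReal.ofReal_coe_nnreal, NNReal.coe_real_pi,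
    ← ENNReal.ofReal_mul (by positivity), ← ENNReal.ofReal_mul (by positivity)]
  ring_nf

end bidisc

def nearBoundaryBox (t : ℝ) : Set ((ℂ × ℂ) × ℂ × ℂ) := bidisc t t ×ˢ bidisc t (-t)

section nearBoundaryBox

variable {t : ℝ}

theorem nearBoundaryBox_subset_unitBall2_prod (ht₀ : 0 ≤ t) (ht : t ≤ 1 / 2) :
    nearBoundaryBox t ⊆ unitBall2 ×ˢ unitBall2 :=
  prod_mono (bidisc_subset_unitBall2 ht (Complex.norm_of_nonneg ht₀))
    (bidisc_subset_unitBall2 ht (by rw [norm_neg, Complex.norm_of_nonneg ht₀]))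

theorem le_ballKernel_of_mem_nearBoundaryBox (ht : t ≤ 1 / 2) {z w : ℂ × ℂ}
    (hzw : (z, w) ∈ nearBoundaryBox t) : t ^ 2 / (6 * t) ^ 6 ≤ ballKernel z w := by
  have hz : z ∈ bidisc t t := hzw.1
  have hw : w ∈ bidisc t (-t) := hzw.2
  have ht₀ := pos_of_mem_bidisc hz
  obtain ⟨hzB, hwB⟩ := nearBoundaryBox_subset_unitBall2_prod ht₀.le ht hzw
  have hnt : ‖(t : ℂ)‖ = t := Complex.norm_of_nonneg ht₀.le
  have hnt' : ‖-(t : ℂ)‖ = t := by rw [norm_neg, hnt]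
  have hsep : t < ‖z.2 - w.2‖ := by
    have h2t : ‖(t : ℂ) - -t‖ = 2 * t := by
      rw [sub_neg_eq_add, ← two_mul, norm_mul, hnt, RCLike.norm_two]
    have := norm_sub_le_norm_sub_add_norm_sub (t : ℂ) z.2 (-t)
    have := norm_sub_le_norm_sub_add_norm_sub z.2 w.2 (-t)
    have := mem_ball_iff_norm'.1 hz.2
    have := mem_ball_iff_norm.1 hw.2
    linarith
  have hden_pos := norm_one_sub_inner_pos hzB hwB
  have hden_le : ‖1 - z.1 * conj w.1 - z.2 * conj w.2‖ ≤ 6 * t := by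
    have h₁ := norm_one_sub_fst_lt hz
    have h₂ := norm_one_sub_fst_lt hw
    have hprod : ‖z.2‖ * ‖w.2‖ ≤ 3 * t / 2 * (3 * t / 2) := by
      gcongr
      exacts [(norm_snd_lt hnt hz).le, (norm_snd_lt hnt' hw).le]
    have hsq : 3 * t / 2 * (3 * t / 2) ≤ 2 * t := by nlinarith
    have := norm_one_sub_inner_le (z₂ := z.2) (w₁ := w.1) (w₂ := w.2)
      ((norm_fst_lt ht hz).le.trans (by linarith))
    linarith
  have hnum : t ^ 2 ≤ ‖z.1 - w.1‖ ^ 2 + ‖z.2 - w.2‖ ^ 2 := by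
    have := pow_le_pow_left₀ ht₀.le hsep.le 2
    linarith [sq_nonneg ‖z.1 - w.1‖]
  exact div_le_div₀ (by positivity) hnum (by positivity) (by gcongr)

theorem measurableSet_nearBoundaryBox : MeasurableSet (nearBoundaryBox t) :=
  measurableSet_bidisc.prod measurableSet_bidisc

theorem volume_nearBoundaryBox (ht : 0 ≤ t) :
    volume (nearBoundaryBox t) = ENNReal.ofReal ((π * (t / 2) ^ 2) ^ 4) := by
  rw [nearBoundaryBox, Measure.volume_eq_prod, Measure.prod_prod, volume_bidisc ht,
    volume_bidisc ht, ← ENNReal.ofReal_mul (by positivity)]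
  ring_nf

theorem ofReal_le_setLIntegral_ballKernel_sq (ht₀ : 0 < t) (ht : t ≤ 1 / 2) :
    ENNReal.ofReal (π ^ 4 / (4 ^ 4 * 6 ^ 12)) ≤
      ∫⁻ p in nearBoundaryBox t, ENNReal.ofReal (ballKernel p.1 p.2 ^ 2) := calc
  ENNReal.ofReal (π ^ 4 / (4 ^ 4 * 6 ^ 12))
      = ENNReal.ofReal ((t ^ 2 / (6 * t) ^ 6) ^ 2) * volume (nearBoundaryBox t) := by
        rw [volume_nearBoundaryBox ht₀.le, ← ENNReal.ofReal_mul (by positivity)]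
        congr 1
        field_simp
        ring
  _ = ∫⁻ _ in nearBoundaryBox t, ENNReal.ofReal ((t ^ 2 / (6 * t) ^ 6) ^ 2) :=
        (setLIntegral_const _ _).symm
  _ ≤ ∫⁻ p in nearBoundaryBox t, ENNReal.ofReal (ballKernel p.1 p.2 ^ 2) :=
        setLIntegral_mono' measurableSet_nearBoundaryBox fun _ hp => ENNReal.ofReal_le_ofReal <|
          pow_le_pow_left₀ (by positivity) (le_ballKernel_of_mem_nearBoundaryBox ht hp) 2

theorem nearBoundaryBox_subset_preimage_Ioo :
    nearBoundaryBox t ⊆ (fun p => 1 - p.1.1.re) ⁻¹' Ioo t (2 * t) :=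
  fun _ hp => sub_re_mem_Ioo_of_mem_bidisc hp.1

end nearBoundaryBox

theorem pairwise_disjoint_nearBoundaryBox_half_pow :
    Pairwise (Disjoint on fun k : ℕ => nearBoundaryBox ((1 / 2) ^ (k + 1))) := by
  have hIoo := (pow_right_anti₀ (a := (1 / 2 : ℝ)) (by norm_num) (by norm_num))
    |>.pairwise_disjoint_on_Ioo_succ
  refine hIoo.mono fun k l h => (h.preimage fun p : (ℂ × ℂ) × ℂ × ℂ => 1 - p.1.1.re).mono ?_ ?_
  all_goals
    refine nearBoundaryBox_subset_preimage_Ioo.trans_eq ?_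
    simp only [Order.succ_eq_add_one]
    ring_nf

end

/-- The kernel `K(z,w) = (|z₁−w₁|² + |z₂−w₂|²)/|1 − z₁·conj w₁ − z₂·conj w₂|⁶` is not square
integrable over `𝔹² × 𝔹²`: the integral of `K²` over `𝔹² × 𝔹²` is infinite. -/
theorem ball_kernel_not_sq_integrable :
    ∫⁻ p in ({z : ℂ × ℂ | ‖z.1‖ ^ 2 + ‖z.2‖ ^ 2 < 1} ×ˢ
        {z : ℂ × ℂ | ‖z.1‖ ^ 2 + ‖z.2‖ ^ 2 < 1}),
      ENNReal.ofReal
        (((‖p.1.1 - p.2.1‖ ^ 2 + ‖p.1.2 - p.2.2‖ ^ 2) /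
          ‖1 - p.1.1 * (starRingEnd ℂ) p.2.1 -
            p.1.2 * (starRingEnd ℂ) p.2.2‖ ^ 6) ^ 2) = ⊤ := by
  have hscale (k : ℕ) : 0 < (1 / 2 : ℝ) ^ (k + 1) ∧ (1 / 2 : ℝ) ^ (k + 1) ≤ 1 / 2 :=
    ⟨by positivity, pow_le_of_le_one (by norm_num) (by norm_num) k.succ_ne_zero⟩
  refine setLIntegral_eq_top_of_pairwise_disjoint (fun _ => measurableSet_nearBoundaryBox)
    pairwise_disjoint_nearBoundaryBox_half_pow
    (fun k => nearBoundaryBox_subset_unitBall2_prod (hscale k).1.le (hscale k).2) ?_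
    (fun k => ofReal_le_setLIntegral_ballKernel_sq (hscale k).1 (hscale k).2)
  exact ENNReal.ofReal_ne_zero_iff.2 (by positivity)
end
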